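/- The spinorial conjugation operator C on the spinor space S, defined by C(ψ) = (−1)^{k(k+1)/2} ⋆_S(ψ̄) for ψ of degree k (where ⋆_S is the Hodge star on S = Λ(V_+) and the bar is complex conjugation fixing the basis vectors σ_I), anticommutes with each gamma operator: C γ_i + γ_i C = 0 for all i ∈ {1,…,n}. -/

import Mathlib

noncomputable section

/-- The spinor space `S = Λ(V₊)`, `V₊ ≅ ℂʳ`, modelled by its basis of
multivectors `σ_I = ∏_{j ∈ I} (e_{2j-1} + i e_{2j})/√2`, `I ⊆ {1,…,r}`. -/
abbrev Spinor (r : ℕ) := Finset (Fin r) →₀ ℂ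

/-- The sign `(-1)^{#{i ∈ I : i < j}}` arising when wedging `σ_j` into `σ_I`. -/
def spinSgn {r : ℕ} (I : Finset (Fin r)) (j : Fin r) : ℂ :=
  (-1) ^ (I.filter (fun i => i < j)).card

/-- The creation operator (wedging with the basis vector of `V₊` numbered `j`). -/
def creation {r : ℕ} (j : Fin r) : Spinor r →ₗ[ℂ] Spinor r :=
  Finsupp.lsum ℂ fun I => LinearMap.toSpanSingleton ℂ (Spinor r)
    (if j ∈ I then 0 else spinSgn I j • Finsupp.single (insert j I) 1)

/-- The annihilation operator (contraction with the dual basis vector of `V₋`). -/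
def annihilation {r : ℕ} (j : Fin r) : Spinor r →ₗ[ℂ] Spinor r :=
  Finsupp.lsum ℂ fun I => LinearMap.toSpanSingleton ℂ (Spinor r)
    (if j ∈ I then spinSgn I j • Finsupp.single (I.erase j) 1 else 0)

/-- The Clifford action of the basis vector `e_i` of `ℂⁿ`, `n = 2r`, on `S`:
`x·ξ = x₊ ∧ ξ + x₋ ⨼ ξ` gives `γ_{2j-1} = a_j + a_j†` and `γ_{2j} = i(a_j† - a_j)`
in terms of creation/annihilation operators. -/
def gammaOp {r : ℕ} (i : Fin (2 * r)) : Spinor r →ₗ[ℂ] Spinor r :=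
  if (i : ℕ) % 2 = 0 then
    creation ⟨(i : ℕ) / 2, by have := i.isLt; omega⟩
      + annihilation ⟨(i : ℕ) / 2, by have := i.isLt; omega⟩
  else
    Complex.I • (annihilation ⟨(i : ℕ) / 2, by have := i.isLt; omega⟩
      - creation ⟨(i : ℕ) / 2, by have := i.isLt; omega⟩)

/-- The scalar product on `S` making the basis spinors `σ_I` orthonormal
(conjugate-linear in the first argument). -/
def spinInner {r : ℕ} (f g : Spinor r) : ℂ :=
  f.sum fun I c => (starRingEnd ℂ) c * g I

/-- The number of inversions of the shuffle `(I, Iᶜ)`, whose parity is the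
Hodge-star sign: `⋆_S σ_I = (-1)^{shuffleInversions I} σ_{Iᶜ}`. -/
def shuffleInversions {r : ℕ} (I : Finset (Fin r)) : ℕ :=
  ∑ i ∈ I, ((Iᶜ).filter (fun j => j < i)).card

/-!
On basis spinors `C` is conjugate-linear and sends `σ_I` to `±σ_{Iᶜ}`, so wedging `σ_j` into
`σ_I` corresponds to contracting `σ_j` out of `σ_{Iᶜ}`: `C a_j† = -a_j C` and `C a_j = -a_j† C`.
The signs cancel because the exponents of `-1` on the two sides differ by
`2 #{i ∈ I | i < j} + 1`. Since `γ` is `a_j + a_j†` or `i (a_j - a_j†)` and `C (i ψ) = -i C ψ`,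
both kinds of gamma operators anticommute with `C`.
-/

variable {r : ℕ}

lemma creation_single (j : Fin r) (I : Finset (Fin r)) (c : ℂ) :
    creation j (Finsupp.single I c)
      = if j ∈ I then 0 else Finsupp.single (insert j I) (spinSgn I j * c) := by
  simp only [creation, Finsupp.lsum_single, LinearMap.toSpanSingleton_apply]
  split_ifs
  · exact smul_zero c
  · rw [smul_smul, Finsupp.smul_single_one, mul_comm]

lemma annihilation_single (j : Fin r) (I : Finset (Fin r)) (c : ℂ) :
    annihilation j (Finsupp.single I c)
      = if j ∈ I then Finsupp.single (I.erase j) (spinSgn I j * c) else 0 := by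
  simp only [annihilation, Finsupp.lsum_single, LinearMap.toSpanSingleton_apply]
  split_ifs
  · rw [smul_smul, Finsupp.smul_single_one, mul_comm]
  · exact smul_zero c

lemma spinSgn_insert_self (j : Fin r) (I : Finset (Fin r)) :
    spinSgn (insert j I) j = spinSgn I j := by
  rw [spinSgn, Finset.filter_insert, if_neg (lt_irrefl j), spinSgn]

lemma spinSgn_erase_self (j : Fin r) (I : Finset (Fin r)) :
    spinSgn (I.erase j) j = spinSgn I j := by
  rw [spinSgn, Finset.filter_erase, Finset.erase_eq_of_notMem (by simp), spinSgn]

lemma star_spinSgn (I : Finset (Fin r)) (j : Fin r) :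
    starRingEnd ℂ (spinSgn I j) = spinSgn I j := by
  simp [spinSgn]

lemma card_filter_lt_add_card_filter_gt {α : Type*} [LinearOrder α] {s : Finset α} {a : α}
    (ha : a ∉ s) : (s.filter (· < a)).card + (s.filter (a < ·)).card = s.card := by
  rw [← Finset.card_filter_add_card_filter_not (s := s) (p := (· < a))]
  congr 2
  refine Finset.filter_congr fun x hx => ?_
  rw [not_lt, (ne_of_mem_of_not_mem hx ha).symm.le_iff_lt]

lemma shuffleInversions_insert {j : Fin r} {I : Finset (Fin r)} (hj : j ∉ I) :
    shuffleInversions (insert j I) + (I.filter (j < ·)).card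
      = shuffleInversions I + (Iᶜ.filter (· < j)).card := by
  have hterm : ∀ i ∈ I, ((Iᶜ.erase j).filter (· < i)).card + (if j < i then 1 else 0)
      = (Iᶜ.filter (· < i)).card := by
    intro i _
    rw [Finset.filter_erase]
    split_ifs with hji
    · exact Finset.card_erase_add_one (by simp [hj, hji])
    · rw [Finset.erase_eq_of_notMem (by simp [hji]), add_zero]
  rw [shuffleInversions, Finset.sum_insert hj, Finset.compl_insert, Finset.filter_erase,
    Finset.erase_eq_of_notMem (by simp), Finset.card_filter (j < ·) I, shuffleInversions,
    ← Finset.sum_congr rfl hterm, Finset.sum_add_distrib]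
  ring

lemma neg_one_pow_add_neg_one_pow_of_odd {R : Type*} [Ring R] {m n : ℕ} (h : Odd (m + n)) :
    (-1 : R) ^ m + (-1 : R) ^ n = 0 := by
  rcases Nat.even_or_odd m with hm | hm
  · rw [hm.neg_one_pow, ((Nat.odd_add'.1 h).2 hm).neg_one_pow, add_neg_cancel]
  · rw [hm.neg_one_pow, ((Nat.odd_add.1 h).1 hm).neg_one_pow, neg_add_cancel]

lemma succ_mul_succ_succ_div_two (k : ℕ) :
    (k + 1) * (k + 1 + 1) / 2 = k * (k + 1) / 2 + (k + 1) := by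
  have : (k + 1) * (k + 1 + 1) = k * (k + 1) + 2 * (k + 1) := by ring
  rw [this, Nat.add_mul_div_left _ _ two_pos]

def conjSign (I : Finset (Fin r)) : ℂ :=
  (-1 : ℂ) ^ (I.card * (I.card + 1) / 2) * (-1 : ℂ) ^ shuffleInversions I

lemma conjSign_mul_self (I : Finset (Fin r)) : conjSign I * conjSign I = 1 := by
  rw [conjSign, ← pow_add, ← pow_add, (Even.add_self _).neg_one_pow]

lemma spinSgn_mul_conjSign_insert_add {j : Fin r} {I : Finset (Fin r)} (hj : j ∉ I) :
    spinSgn I j * conjSign (insert j I) + conjSign I * spinSgn Iᶜ j = 0 := by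
  have hinv := shuffleInversions_insert hj
  have hcard := card_filter_lt_add_card_filter_gt hj
  simp only [spinSgn, conjSign, Finset.card_insert_of_notMem hj, succ_mul_succ_succ_div_two,
    ← pow_add]
  exact neg_one_pow_add_neg_one_pow_of_odd (Nat.odd_iff.2 (by omega))

lemma spinSgn_mul_conjSign_erase_add {j : Fin r} {I : Finset (Fin r)} (hj : j ∈ I) :
    spinSgn I j * conjSign (I.erase j) + conjSign I * spinSgn Iᶜ j = 0 := by
  have h := spinSgn_mul_conjSign_insert_add (Finset.notMem_erase j I)
  rw [Finset.insert_erase hj, spinSgn_erase_self, Finset.compl_erase, spinSgn_insert_self] at h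
  linear_combination (conjSign I * conjSign (I.erase j)) * h
    - (spinSgn I j * conjSign (I.erase j)) * conjSign_mul_self I
    - (conjSign I * spinSgn Iᶜ j) * conjSign_mul_self (I.erase j)

def spinConj : Spinor r →ₗ⋆[ℂ] Spinor r :=
  (Finsupp.lsum ℂ fun I => conjSign I • Finsupp.lsingle Iᶜ).comp
    (Finsupp.mapRange.linearMap (starRingEnd ℂ).toSemilinearMap)

lemma spinConj_single (I : Finset (Fin r)) (c : ℂ) :
    spinConj (Finsupp.single I c) = Finsupp.single Iᶜ (conjSign I * starRingEnd ℂ c) := by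
  simp [spinConj]

lemma spinConj_comp_creation (j : Fin r) :
    spinConj.comp (creation j) = -(annihilation j).comp spinConj := by
  refine Finsupp.lhom_ext fun I c => ?_
  simp only [LinearMap.comp_apply, LinearMap.neg_apply, creation_single, spinConj_single,
    annihilation_single, Finset.mem_compl]
  split_ifs with hj
  · rw [map_zero, neg_zero]
  · rw [spinConj_single, map_mul, star_spinSgn, Finset.compl_insert, ← Finsupp.single_neg]
    congr 1
    linear_combination starRingEnd ℂ c * spinSgn_mul_conjSign_insert_add hj

lemma spinConj_comp_annihilation (j : Fin r) :
    spinConj.comp (annihilation j) = -(creation j).comp spinConj := by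
  refine Finsupp.lhom_ext fun I c => ?_
  simp only [LinearMap.comp_apply, LinearMap.neg_apply, annihilation_single, spinConj_single,
    creation_single, Finset.mem_compl]
  split_ifs with hj
  · rw [spinConj_single, map_mul, star_spinSgn, Finset.compl_erase, ← Finsupp.single_neg]
    congr 1
    linear_combination starRingEnd ℂ c * spinSgn_mul_conjSign_erase_add hj
  · rw [map_zero, neg_zero]

lemma spinConj_gammaOp_add (i : Fin (2 * r)) (ξ : Spinor r) :
    spinConj (gammaOp i ξ) + gammaOp i (spinConj ξ) = 0 := by
  have hcre (j : Fin r) := LinearMap.congr_fun (spinConj_comp_creation j) ξ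
  have hann (j : Fin r) := LinearMap.congr_fun (spinConj_comp_annihilation j) ξ
  simp only [LinearMap.comp_apply, LinearMap.neg_apply] at hcre hann
  unfold gammaOp
  split_ifs
  · simp only [LinearMap.add_apply, map_add, hcre, hann]
    abel
  · simp only [LinearMap.smul_apply, LinearMap.sub_apply, map_smulₛₗ, map_sub, hcre, hann,
      Complex.conj_I]
    module

lemma eq_spinConj_of_add_of_single {C : Spinor r → Spinor r}
    (hC_add : ∀ ξ ζ, C (ξ + ζ) = C ξ + C ζ)
    (hC_single : ∀ I c, C (Finsupp.single I c) = spinConj (Finsupp.single I c)) :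
    C = spinConj := by
  have h := Finsupp.addHom_ext (f := AddMonoidHom.mk' C hC_add)
    (g := spinConj.toAddMonoidHom) hC_single
  exact funext (DFunLike.congr_fun h)

/-- **The spinorial conjugation anticommutes with the gamma operators.**
`C(ψ) = (-1)^{k(k+1)/2} ⋆_S(ψ̄)` on degree-`k` spinors — so on a basis multivector
`σ_I` with `|I| = k`, `C(c • σ_I) = c̄ (-1)^{k(k+1)/2} (-1)^{shuffleInversions I} σ_{Iᶜ}` —
is antilinear and satisfies `C γ_i + γ_i C = 0` for all `i`. -/
theorem conjugation_anticommutes_gamma {r : ℕ}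
    (C : Spinor r → Spinor r)
    (hC_add : ∀ ξ ζ, C (ξ + ζ) = C ξ + C ζ)
    (hC_basis : ∀ (I : Finset (Fin r)) (c : ℂ),
      C (Finsupp.single I c)
        = ((-1 : ℂ) ^ (I.card * (I.card + 1) / 2) * (-1 : ℂ) ^ shuffleInversions I)
          • Finsupp.single Iᶜ ((starRingEnd ℂ) c)) :
    ∀ (i : Fin (2 * r)) (ξ : Spinor r),
      C (gammaOp i ξ) + gammaOp i (C ξ) = 0 := by
  obtain rfl : C = spinConj := eq_spinConj_of_add_of_single hC_add fun I c => by
    rw [hC_basis, spinConj_single, Finsupp.smul_single', conjSign]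
  exact spinConj_gammaOp_add
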